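/- Validity criterion via surjectivity. In the piecewise monotone setting, the φ-expansion is valid if and only if φ̄_∞ is well-defined on all of A^ℕ (i.e. limₙ φ̄ₙ(x) exists for every x ∈ A^ℕ) and the resulting map φ̄_∞ : A^ℕ → [0,1] is surjective. -/

import Mathlib

open Set Filter Topology

/-- A piecewise monotone dynamical system on `[0,1]`: partition points
`0 = a 0 < a 1 < ⋯ < a k = 1` (`k ≥ 2`), branch intervals `I j = (a j, a (j+1))`,
on each of which `f j` is a continuous strictly monotone map into `[0,1]` with
inverse `g j`; `inc j` records whether `f j` is increasing; the covering condition
`(⋃ᵢ Jᵢ) ∩ I j = I j` (i.e. `I j ⊆ ⋃ᵢ Jᵢ`) holds, where `J i = f i '' I i`. -/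
structure PMS where
  k : ℕ
  a : ℕ → ℝ
  f : ℕ → ℝ → ℝ
  g : ℕ → ℝ → ℝ
  inc : ℕ → Bool
  two_le_k : 2 ≤ k
  a_zero : a 0 = 0
  a_last : a k = 1
  a_mono : ∀ i j, i < j → j ≤ k → a i < a j
  f_cont : ∀ j, j < k → ContinuousOn (f j) (Icc (a j) (a (j + 1)))
  f_mono : ∀ j, j < k → inc j = true → StrictMonoOn (f j) (Icc (a j) (a (j + 1)))
  f_anti : ∀ j, j < k → inc j = false → StrictAntiOn (f j) (Icc (a j) (a (j + 1)))
  f_range : ∀ j, j < k → MapsTo (f j) (Icc (a j) (a (j + 1))) (Icc (0 : ℝ) 1)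
  g_inv : ∀ j, j < k → ∀ t ∈ Icc (a j) (a (j + 1)), g j (f j t) = t
  cover : ∀ j, j < k →
    Ioo (a j) (a (j + 1)) ⊆ ⋃ i ∈ Finset.range k, f i '' Ioo (a i) (a (i + 1))

namespace PMS

/-- The open branch interval `I j = (a j, a (j+1))`. -/
def I (P : PMS) (j : ℕ) : Set ℝ := Ioo (P.a j) (P.a (j + 1))

open Classical in
/-- The index of the branch interval containing `x` (junk value `0` if there is none). -/
noncomputable def idx (P : PMS) (x : ℝ) : ℕ :=
  if h : ∃ j, j < P.k ∧ x ∈ P.I j then h.choose else 0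

open Classical in
/-- The dynamics: `T x = f j x` for `x ∈ I j` (junk value `0` on `S₀`, where `T` is
left undefined in the paper). -/
noncomputable def T (P : PMS) (x : ℝ) : ℝ :=
  if ∃ j, j < P.k ∧ x ∈ P.I j then P.f (P.idx x) x else 0

/-- `S₀ = [0,1] ∖ ⋃ⱼ I j`. -/
def S0 (P : PMS) : Set ℝ := Icc 0 1 \ ⋃ j ∈ Finset.range P.k, P.I j

/-- The singular set `S`: points whose orbit hits `S₀`. -/
def S (P : PMS) : Set ℝ :=
  {x ∈ Icc (0 : ℝ) 1 | ∃ m, P.T^[m] x ∈ P.S0 ∧ ∀ i, i < m → P.T^[i] x ∉ P.S0}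

/-- The coding map (itinerary): `(code x) n = j` iff `Tⁿ x ∈ I j` (for `x ∈ [0,1] ∖ S`). -/
noncomputable def code (P : PMS) (x : ℝ) : ℕ → ℕ := fun n => P.idx (P.T^[n] x)

/-- The map `φ̄` on `[0,k]` as a function of `j ∈ A` and `t ∈ [0,1]`, a point of
`[j, j+1]` being written `j + t`. -/
noncomputable def phibarJ (P : PMS) (j : ℕ) (t : ℝ) : ℝ :=
  if P.inc j then
    if t ≤ P.f j (P.a j) then P.a j
    else if P.f j (P.a (j + 1)) ≤ t then P.a (j + 1)
    else P.g j t
  else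
    if t ≤ P.f j (P.a (j + 1)) then P.a (j + 1)
    else if P.f j (P.a j) ≤ t then P.a j
    else P.g j t

/-- `φ̄ₙ(x) = φ̄(x₀ + φ̄(x₁ + ⋯ + φ̄(x_{n-1})⋯))`. -/
noncomputable def phibarN (P : PMS) : ℕ → (ℕ → ℕ) → ℝ
  | 0, _ => 0
  | n + 1, x => P.phibarJ (x 0) (P.phibarN n fun i => x (i + 1))

/-- `φ̄_∞(x) = limₙ φ̄ₙ(x)` (a junk value where the limit does not exist). -/
noncomputable def phibarInf (P : PMS) (x : ℕ → ℕ) : ℝ :=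
  limUnder atTop fun n => P.phibarN n x

/-- The φ-expansion is well-defined: `limₙ φ̄ₙ(x)` exists for every string `x ∈ A^ℕ`. -/
def WellDefined (P : PMS) : Prop :=
  ∀ x : ℕ → ℕ, (∀ n, x n < P.k) →
    ∃ L : ℝ, Tendsto (fun n => P.phibarN n x) atTop (𝓝 L)

/-- The φ-expansion is valid: for every `x ∈ [0,1] ∖ S`, `limₙ φ̄ₙ(i(x)) = x`. -/
def Valid (P : PMS) : Prop :=
  ∀ x ∈ Icc (0 : ℝ) 1 \ P.S,
    Tendsto (fun n => P.phibarN n (P.code x)) atTop (𝓝 x)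

end PMS

/-!
Write `ψₙ(x, t) = φ̄(x₀ + φ̄(x₁ + ⋯ + φ̄(x_{n−1} + t)⋯))`. Each `φ̄(j + ·)` is monotone
or antitone (it is a clamped inverse of `f_j`), with values `a_j`, `a_{j+1}` at `0` and `1`;
hence the intervals between `ψₙ(x, 0) = φ̄ₙ(x)` and `ψₙ(x, 1)` are nested.

If the expansion is valid: a point strictly inside all these intervals has itinerary `x`, so
`φ̄ₙ(x)` converges to it; there is at most one such point, the intervals shrink to a point and
`φ̄ₙ(x)` converges. Every `y ∈ [0,1]` lies in all the intervals of a digit sequence chosen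
greedily, which gives surjectivity.

Conversely, if `φ̄ₙ(x) → y ∉ S`, then `y` lies in the closure of `I_{x₀}`, hence `x₀ = i₀(y)`;
as `φ̄(x₀ + ·)` inverts the continuous map `f_{x₀}` near `y`, the shifted sequence gives
`φ̄ₙ(σx) → Ty`. Inductively `x = i(y)`, and validity follows from surjectivity.
-/

section NestedIntervals

theorem exists_mem_uIcc_succ {α : Type*} [LinearOrder α] (w : ℕ → α) {y : α} :
    ∀ {K : ℕ}, y ∈ uIcc (w 0) (w (K + 1)) → ∃ j ≤ K, y ∈ uIcc (w j) (w (j + 1))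
  | 0, hy => ⟨0, le_rfl, hy⟩
  | K + 1, hy => by
    rcases uIcc_subset_uIcc_union_uIcc hy with hy | hy
    · obtain ⟨j, hj, hyj⟩ := exists_mem_uIcc_succ w hy
      exact ⟨j, hj.trans K.le_succ, hyj⟩
    · exact ⟨K + 1, le_rfl, hy⟩

theorem mem_uIoo_of_apply_mem_uIoo {α β : Type*} [LinearOrder α] [LinearOrder β] {g : α → β}
    (hg : Monotone g ∨ Antitone g) {s u v : α} (h : g s ∈ uIoo (g u) (g v)) :
    s ∈ uIoo u v := by
  rw [← Ioo_min_max] at h ⊢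
  by_contra hs
  rw [mem_Ioo, not_and_or, not_lt, not_lt] at hs
  rcases hs with hs | hs
  · obtain ⟨hu, hv⟩ := le_min_iff.1 hs
    rcases hg with hg | hg
    · exact h.1.not_ge (le_min (hg hu) (hg hv))
    · exact h.2.not_ge (max_le (hg hu) (hg hv))
  · obtain ⟨hu, hv⟩ := max_le_iff.1 hs
    rcases hg with hg | hg
    · exact h.2.not_ge (max_le (hg hu) (hg hv))
    · exact h.1.not_ge (le_min (hg hu) (hg hv))

variable {a b : ℕ → ℝ}

theorem exists_forall_mem_uIcc_of_nested
    (hnest : ∀ n, uIcc (a (n + 1)) (b (n + 1)) ⊆ uIcc (a n) (b n)) :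
    ∃ y, ∀ n, y ∈ uIcc (a n) (b n) := by
  obtain ⟨y, hy⟩ := IsCompact.nonempty_iInter_of_sequence_nonempty_isCompact_isClosed _ hnest
    (fun _ => nonempty_uIcc) isCompact_uIcc (fun _ => isCompact_uIcc.isClosed)
  exact ⟨y, mem_iInter.1 hy⟩

theorem tendsto_of_nested_uIcc {u : ℕ → ℝ} {y : ℝ}
    (hnest : ∀ n, uIcc (a (n + 1)) (b (n + 1)) ⊆ uIcc (a n) (b n))
    (hu : ∀ n, u n ∈ uIcc (a n) (b n)) (hy : ∀ n, y ∈ uIcc (a n) (b n))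
    (hsub : {z | ∀ n, z ∈ uIoo (a n) (b n)}.Subsingleton) :
    Tendsto u atTop (𝓝 y) := by
  set lo := fun n => min (a n) (b n)
  set hi := fun n => max (a n) (b n)
  have hlo : Monotone lo :=
    monotone_nat_of_le_succ fun n => (uIcc_subset_uIcc_iff_le.1 (hnest n)).1
  have hhi : Antitone hi :=
    antitone_nat_of_succ_le fun n => (uIcc_subset_uIcc_iff_le.1 (hnest n)).2
  have hlo_bdd : BddAbove (range lo) := ⟨y, forall_mem_range.2 fun n => (hy n).1⟩
  have hhi_bdd : BddBelow (range hi) := ⟨y, forall_mem_range.2 fun n => (hy n).2⟩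
  have hL : ⨆ n, lo n ≤ y := ciSup_le fun n => (hy n).1
  have hR : y ≤ ⨅ n, hi n := le_ciInf fun n => (hy n).2
  have hLR : ¬ (⨆ n, lo n) < ⨅ n, hi n := fun hlt => by
    obtain ⟨z, hLz, hzR⟩ := exists_between hlt
    obtain ⟨z', hzz', hz'R⟩ := exists_between hzR
    have inside : ∀ w, ⨆ n, lo n < w → w < ⨅ n, hi n → ∀ n, w ∈ uIoo (a n) (b n) :=
      fun w hLw hwR n =>
        ⟨(le_ciSup hlo_bdd n).trans_lt hLw, hwR.trans_le (ciInf_le hhi_bdd n)⟩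
    exact hzz'.ne (hsub (inside z hLz hzR) (inside z' (hLz.trans hzz') hz'R))
  have hLy : ⨆ n, lo n = y := le_antisymm hL (not_lt.1 fun h => hLR (h.trans_le hR))
  have hRy : ⨅ n, hi n = y := le_antisymm (not_lt.1 fun h => hLR (hL.trans_lt h)) hR
  exact tendsto_of_tendsto_of_tendsto_of_le_of_le (hLy ▸ tendsto_atTop_ciSup hlo hlo_bdd)
    (hRy ▸ tendsto_atTop_ciInf hhi hhi_bdd) (fun n => (hu n).1) (fun n => (hu n).2)

end NestedIntervals

namespace PMS

variable (P : PMS)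

section Partition

variable {i j : ℕ}

lemma k_pos : 0 < P.k := lt_of_lt_of_le two_pos P.two_le_k

lemma a_le_a (hij : i ≤ j) (hj : j ≤ P.k) : P.a i ≤ P.a j :=
  hij.eq_or_lt.elim (fun h => h ▸ le_rfl) fun h => (P.a_mono i j h hj).le

lemma a_lt_a_succ (hj : j < P.k) : P.a j < P.a (j + 1) :=
  P.a_mono j (j + 1) j.lt_succ_self hj

lemma a_mem_Icc (hj : j < P.k) : P.a j ∈ Icc (P.a j) (P.a (j + 1)) :=
  left_mem_Icc.2 (P.a_lt_a_succ hj).le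

lemma a_succ_mem_Icc (hj : j < P.k) : P.a (j + 1) ∈ Icc (P.a j) (P.a (j + 1)) :=
  right_mem_Icc.2 (P.a_lt_a_succ hj).le

lemma Icc_a_subset_unit (hj : j < P.k) : Icc (P.a j) (P.a (j + 1)) ⊆ Icc 0 1 :=
  Icc_subset_Icc (P.a_zero ▸ P.a_le_a j.zero_le hj.le) (P.a_last ▸ P.a_le_a hj le_rfl)

lemma I_subset_unit (hj : j < P.k) : P.I j ⊆ Icc 0 1 :=
  Ioo_subset_Icc_self.trans (P.Icc_a_subset_unit hj)

lemma eq_of_mem_I_of_mem_Icc {u : ℝ} (hi : i < P.k) (hj : j < P.k) (hu : u ∈ P.I j)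
    (hu' : u ∈ Icc (P.a i) (P.a (i + 1))) : i = j := by
  by_contra hne
  rcases Nat.lt_or_gt_of_ne hne with h | h
  · exact (hu'.2.trans (P.a_le_a h hj.le)).not_gt hu.1
  · exact (hu.2.trans_le ((P.a_le_a h hi.le).trans hu'.1)).false

lemma idx_eq {u : ℝ} (hj : j < P.k) (hu : u ∈ P.I j) : P.idx u = j := by
  have hex : ∃ i, i < P.k ∧ u ∈ P.I i := ⟨j, hj, hu⟩
  rw [idx, dif_pos hex]
  obtain ⟨hi, hui⟩ := hex.choose_spec
  exact P.eq_of_mem_I_of_mem_Icc hi hj hu (Ioo_subset_Icc_self hui)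

lemma T_eq {u : ℝ} (hj : j < P.k) (hu : u ∈ P.I j) : P.T u = P.f j u := by
  rw [T, if_pos ⟨j, hj, hu⟩, P.idx_eq hj hu]

lemma T_mem_Icc (u : ℝ) : P.T u ∈ Icc 0 1 := by
  by_cases h : ∃ j, j < P.k ∧ u ∈ P.I j
  · obtain ⟨j, hj, hu⟩ := h
    rw [P.T_eq hj hu]
    exact P.f_range j hj (Ioo_subset_Icc_self hu)
  · rw [T, if_neg h]
    exact left_mem_Icc.2 zero_le_one

lemma iterate_T_mem_Icc {y : ℝ} (hy : y ∈ Icc 0 1) : ∀ m, P.T^[m] y ∈ Icc 0 1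
  | 0 => hy
  | m + 1 => by rw [Function.iterate_succ_apply']; exact P.T_mem_Icc _

lemma mem_Icc_diff_S_iff {y : ℝ} :
    y ∈ Icc 0 1 \ P.S ↔ y ∈ Icc 0 1 ∧ ∀ m, ∃ j < P.k, P.T^[m] y ∈ P.I j := by
  classical
  constructor
  · rintro ⟨hy, hyS⟩
    refine ⟨hy, fun m => by_contra fun hm => ?_⟩
    have hex : ∃ m, P.T^[m] y ∈ P.S0 :=
      ⟨m, P.iterate_T_mem_Icc hy m, fun hU =>
        hm (by simpa only [mem_iUnion₂, Finset.mem_range, exists_prop] using hU)⟩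
    exact hyS ⟨hy, Nat.find hex, Nat.find_spec hex, fun i hi => Nat.find_min hex hi⟩
  · rintro ⟨hy, horb⟩
    refine ⟨hy, fun ⟨_, m, hm, _⟩ => ?_⟩
    obtain ⟨j, hj, hmem⟩ := horb m
    exact hm.2 (mem_iUnion₂_of_mem (Finset.mem_range.2 hj) hmem)

end Partition

section InverseBranch

variable {j : ℕ}

lemma f_injOn (hj : j < P.k) : InjOn (P.f j) (Icc (P.a j) (P.a (j + 1))) := by
  cases hinc : P.inc j
  exacts [(P.f_anti j hj hinc).injOn, (P.f_mono j hj hinc).injOn]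

lemma g_mem_Icc_and_f_g (hj : j < P.k) {t : ℝ}
    (ht : t ∈ uIcc (P.f j (P.a j)) (P.f j (P.a (j + 1)))) :
    P.g j t ∈ Icc (P.a j) (P.a (j + 1)) ∧ P.f j (P.g j t) = t := by
  have hle := (P.a_lt_a_succ hj).le
  obtain ⟨s, hs, rfl⟩ :=
    intermediate_value_uIcc (by rw [uIcc_of_le hle]; exact P.f_cont j hj) ht
  rw [uIcc_of_le hle] at hs
  rw [P.g_inv j hj s hs]
  exact ⟨hs, rfl⟩

lemma phibarJ_cases (t : ℝ) :
    P.phibarJ j t = P.a j ∨ P.phibarJ j t = P.a (j + 1) ∨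
      P.phibarJ j t = P.g j t ∧ t ∈ uIcc (P.f j (P.a j)) (P.f j (P.a (j + 1))) := by
  unfold phibarJ
  split_ifs <;> grind [mem_uIcc]

lemma phibarJ_mem (hj : j < P.k) (t : ℝ) : P.phibarJ j t ∈ Icc (P.a j) (P.a (j + 1)) := by
  rcases P.phibarJ_cases t with h | h | ⟨h, ht⟩ <;> rw [h]
  exacts [P.a_mem_Icc hj, P.a_succ_mem_Icc hj, (P.g_mem_Icc_and_f_g hj ht).1]

lemma f_phibarJ (hj : j < P.k) (t : ℝ) :
    P.f j (P.phibarJ j t) = max (min (P.f j (P.a j)) (P.f j (P.a (j + 1))))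
      (min (max (P.f j (P.a j)) (P.f j (P.a (j + 1)))) t) := by
  have hA := P.a_mem_Icc hj
  have hB := P.a_succ_mem_Icc hj
  have hAB := P.a_lt_a_succ hj
  have hg := fun s => P.g_mem_Icc_and_f_g hj (t := s)
  cases hinc : P.inc j
  · have := P.f_anti j hj hinc hA hB hAB
    simp only [phibarJ, hinc, Bool.false_eq_true, if_false]
    split_ifs <;> grind [mem_uIcc]
  · have := P.f_mono j hj hinc hA hB hAB
    simp only [phibarJ, hinc, if_true]
    split_ifs <;> grind [mem_uIcc]

lemma phibarJ_f (hj : j < P.k) {s : ℝ} (hs : s ∈ Icc (P.a j) (P.a (j + 1))) :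
    P.phibarJ j (P.f j s) = s := by
  refine P.f_injOn hj (P.phibarJ_mem hj _) hs ?_
  have hfs : P.f j s ∈ uIcc (P.f j (P.a j)) (P.f j (P.a (j + 1))) := by
    cases hinc : P.inc j
    · have hf := (P.f_anti j hj hinc).antitoneOn
      exact mem_uIcc.2 (Or.inr ⟨hf hs (P.a_succ_mem_Icc hj) hs.2, hf (P.a_mem_Icc hj) hs hs.1⟩)
    · have hf := (P.f_mono j hj hinc).monotoneOn
      exact mem_uIcc.2 (Or.inl ⟨hf (P.a_mem_Icc hj) hs hs.1, hf hs (P.a_succ_mem_Icc hj) hs.2⟩)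
  rw [P.f_phibarJ hj, min_eq_right hfs.2, max_eq_right hfs.1]

lemma f_phibarJ_of_mem_I (hj : j < P.k) {t : ℝ} (ht : P.phibarJ j t ∈ P.I j) :
    P.f j (P.phibarJ j t) = t := by
  rcases P.phibarJ_cases t with h | h | ⟨h, ht'⟩ <;> rw [h] at ht ⊢
  exacts [absurd ht.1 (lt_irrefl _), absurd ht.2 (lt_irrefl _), (P.g_mem_Icc_and_f_g hj ht').2]

lemma phibarJ_monotone_or_antitone (hj : j < P.k) :
    Monotone (P.phibarJ j) ∨ Antitone (P.phibarJ j) := by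
  have hmem := P.phibarJ_mem hj
  cases hinc : P.inc j
  · refine Or.inr fun t₁ t₂ ht => ((P.f_anti j hj hinc).le_iff_ge (hmem t₁) (hmem t₂)).1 ?_
    rw [P.f_phibarJ hj, P.f_phibarJ hj]
    gcongr
  · refine Or.inl fun t₁ t₂ ht => ((P.f_mono j hj hinc).le_iff_le (hmem t₁) (hmem t₂)).1 ?_
    rw [P.f_phibarJ hj, P.f_phibarJ hj]
    gcongr

lemma phibarJ_zero_one (hj : j < P.k) :
    P.phibarJ j 0 = P.a j ∧ P.phibarJ j 1 = P.a (j + 1) ∨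
      P.phibarJ j 0 = P.a (j + 1) ∧ P.phibarJ j 1 = P.a j := by
  have hA := P.f_range j hj (P.a_mem_Icc hj)
  have hB := P.f_range j hj (P.a_succ_mem_Icc hj)
  have hAB := P.a_lt_a_succ hj
  cases hinc : P.inc j
  · have := P.f_anti j hj hinc (P.a_mem_Icc hj) (P.a_succ_mem_Icc hj) hAB
    simp only [phibarJ, hinc, Bool.false_eq_true, if_false]
    grind
  · have := P.f_mono j hj hinc (P.a_mem_Icc hj) (P.a_succ_mem_Icc hj) hAB
    simp only [phibarJ, hinc, if_true]
    grind

lemma tendsto_of_tendsto_phibarJ (hj : j < P.k) {u : ℕ → ℝ} {y : ℝ} (hy : y ∈ P.I j)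
    (h : Tendsto (fun n => P.phibarJ j (u n)) atTop (𝓝 y)) :
    Tendsto u atTop (𝓝 (P.f j y)) := by
  have hcont : ContinuousAt (P.f j) y :=
    (P.f_cont j hj).continuousAt (Icc_mem_nhds hy.1 hy.2)
  have heq : ∀ᶠ n in atTop, P.f j (P.phibarJ j (u n)) = u n :=
    (h.eventually (isOpen_Ioo.mem_nhds hy)).mono fun n hn => P.f_phibarJ_of_mem_I hj hn
  exact (hcont.tendsto.comp h).congr' heq

end InverseBranch

/-- `psi n x t = φ̄(x₀ + φ̄(x₁ + ⋯ + φ̄(x_{n−1} + t)⋯))`. -/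
noncomputable def psi (P : PMS) : ℕ → (ℕ → ℕ) → ℝ → ℝ
  | 0, _, t => t
  | n + 1, x, t => P.phibarJ (x 0) (P.psi n (fun i => x (i + 1)) t)

section Cylinders

variable {x : ℕ → ℕ}

lemma phibarN_eq_psi (n : ℕ) (x : ℕ → ℕ) : P.phibarN n x = P.psi n x 0 := by
  induction n generalizing x with
  | zero => rfl
  | succ n ih => rw [phibarN, psi, ih]

lemma psi_succ' (n : ℕ) (x : ℕ → ℕ) (t : ℝ) :
    P.psi (n + 1) x t = P.psi n x (P.phibarJ (x n) t) := by
  induction n generalizing x with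
  | zero => rfl
  | succ n ih => rw [psi, ih]; rfl

lemma psi_monotone_or_antitone (hx : ∀ i, x i < P.k) (n : ℕ) :
    Monotone (P.psi n x) ∨ Antitone (P.psi n x) := by
  induction n generalizing x with
  | zero => exact Or.inl monotone_id
  | succ n ih =>
    change Monotone (P.phibarJ (x 0) ∘ P.psi n _) ∨ Antitone (P.phibarJ (x 0) ∘ P.psi n _)
    rcases P.phibarJ_monotone_or_antitone (hx 0) with hφ | hφ <;>
      rcases ih fun i => hx (i + 1) with hψ | hψ
    exacts [Or.inl (hφ.comp hψ), Or.inr (hφ.comp_antitone hψ), Or.inr (hφ.comp_monotone hψ),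
      Or.inl (hφ.comp hψ)]

lemma uIcc_psi_succ_subset (hx : ∀ i, x i < P.k) (n : ℕ) :
    uIcc (P.psi (n + 1) x 0) (P.psi (n + 1) x 1) ⊆ uIcc (P.psi n x 0) (P.psi n x 1) := by
  have hmaps := monotone_or_antitone_iff_uIcc.1 (P.psi_monotone_or_antitone hx n) 0 1
  have hunit : ∀ t, P.phibarJ (x n) t ∈ uIcc (0 : ℝ) 1 := fun t => by
    rw [uIcc_of_le zero_le_one]
    exact P.Icc_a_subset_unit (hx n) (P.phibarJ_mem (hx n) t)
  rw [P.psi_succ', P.psi_succ']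
  exact uIcc_subset_uIcc (hmaps _ (hunit 0)) (hmaps _ (hunit 1))

end Cylinders

section Itineraries

variable {x : ℕ → ℕ}

lemma head_eq_and_tendsto_tail (hx : ∀ i, x i < P.k) {j : ℕ} (hj : j < P.k) {y : ℝ}
    (hy : y ∈ P.I j) (h : Tendsto (fun n => P.phibarN n x) atTop (𝓝 y)) :
    x 0 = j ∧ Tendsto (fun n => P.phibarN n fun i => x (i + 1)) atTop (𝓝 (P.f j y)) := by
  have h' : Tendsto (fun n => P.phibarJ (x 0) (P.phibarN n fun i => x (i + 1))) atTop (𝓝 y) :=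
    h.comp (tendsto_add_atTop_nat 1)
  have hmem : y ∈ Icc (P.a (x 0)) (P.a (x 0 + 1)) :=
    isClosed_Icc.mem_of_tendsto h' (Eventually.of_forall fun n => P.phibarJ_mem (hx 0) _)
  obtain rfl := P.eq_of_mem_I_of_mem_Icc (hx 0) hj hy hmem
  exact ⟨rfl, P.tendsto_of_tendsto_phibarJ hj hy h'⟩

lemma eq_code_of_tendsto (hx : ∀ i, x i < P.k) {y : ℝ}
    (hy : ∀ m, ∃ j < P.k, P.T^[m] y ∈ P.I j)
    (h : Tendsto (fun n => P.phibarN n x) atTop (𝓝 y)) : x = P.code y := by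
  funext n
  induction n generalizing x y with
  | zero =>
    obtain ⟨j, hj, hyj⟩ := hy 0
    exact (P.head_eq_and_tendsto_tail hx hj hyj h).1.trans (P.idx_eq hj hyj).symm
  | succ n ih =>
    obtain ⟨j, hj, hyj⟩ := hy 0
    have htail := (P.head_eq_and_tendsto_tail hx hj hyj h).2
    rw [← P.T_eq hj hyj] at htail
    exact ih (fun i => hx (i + 1)) (fun m => hy (m + 1)) htail

lemma mem_I_and_tail_of_forall_mem_uIoo (hx : ∀ i, x i < P.k) {y : ℝ}
    (hy : ∀ n, y ∈ uIoo (P.psi n x 0) (P.psi n x 1)) :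
    y ∈ P.I (x 0) ∧ ∀ n, P.f (x 0) y ∈
      uIoo (P.psi n (fun i => x (i + 1)) 0) (P.psi n (fun i => x (i + 1)) 1) := by
  have h₀ := P.phibarJ_mem (hx 0) 0
  have h₁ := P.phibarJ_mem (hx 0) 1
  have hy₀ : y ∈ P.I (x 0) :=
    ⟨(le_min h₀.1 h₁.1).trans_lt (hy 1).1, (hy 1).2.trans_le (max_le h₀.2 h₁.2)⟩
  refine ⟨hy₀, fun n => mem_uIoo_of_apply_mem_uIoo (P.phibarJ_monotone_or_antitone (hx 0)) ?_⟩
  rw [P.phibarJ_f (hx 0) (Ioo_subset_Icc_self hy₀)]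
  exact hy (n + 1)

lemma iterate_T_mem_I_of_forall_mem_uIoo (hx : ∀ i, x i < P.k) {y : ℝ}
    (hy : ∀ n, y ∈ uIoo (P.psi n x 0) (P.psi n x 1)) (p : ℕ) : P.T^[p] y ∈ P.I (x p) := by
  induction p generalizing x y with
  | zero => exact (P.mem_I_and_tail_of_forall_mem_uIoo hx hy).1
  | succ p ih =>
    obtain ⟨hy₀, htail⟩ := P.mem_I_and_tail_of_forall_mem_uIoo hx hy
    rw [Function.iterate_succ_apply, P.T_eq (hx 0) hy₀]
    exact ih (fun i => hx (i + 1)) htail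

lemma subsingleton_setOf_forall_mem_uIoo (hV : P.Valid) (hx : ∀ i, x i < P.k) :
    {z | ∀ n, z ∈ uIoo (P.psi n x 0) (P.psi n x 1)}.Subsingleton := by
  have hlim : ∀ z ∈ {z | ∀ n, z ∈ uIoo (P.psi n x 0) (P.psi n x 1)},
      Tendsto (fun n => P.phibarN n x) atTop (𝓝 z) := fun z hz => by
    have horb := P.iterate_T_mem_I_of_forall_mem_uIoo hx hz
    have hcode : P.code z = x := funext fun p => P.idx_eq (hx p) (horb p)
    have hz : z ∈ Icc 0 1 \ P.S := P.mem_Icc_diff_S_iff.2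
      ⟨P.I_subset_unit (hx 0) (horb 0), fun m => ⟨x m, hx m, horb m⟩⟩
    simpa only [hcode] using hV z hz
  exact fun z₁ h₁ z₂ h₂ => tendsto_nhds_unique (hlim z₁ h₁) (hlim z₂ h₂)

lemma tendsto_phibarN_of_valid (hV : P.Valid) (hx : ∀ i, x i < P.k) {y : ℝ}
    (hy : ∀ n, y ∈ uIcc (P.psi n x 0) (P.psi n x 1)) :
    Tendsto (fun n => P.phibarN n x) atTop (𝓝 y) := by
  simp only [P.phibarN_eq_psi]
  exact tendsto_of_nested_uIcc (P.uIcc_psi_succ_subset hx) (fun _ => left_mem_uIcc) hy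
    (P.subsingleton_setOf_forall_mem_uIoo hV hx)

lemma exists_forall_mem_uIcc_psi {y : ℝ} (hy : y ∈ Icc 0 1) :
    ∃ x : ℕ → ℕ, (∀ n, x n < P.k) ∧ ∀ n, y ∈ uIcc (P.psi n x 0) (P.psi n x 1) := by
  obtain ⟨K, hK⟩ : ∃ K, P.k = K + 1 := Nat.exists_eq_succ_of_ne_zero P.k_pos.ne'
  -- Digits are chosen greedily: the points `h (a j)`, `j ≤ k`, run from `h 0` to `h 1`, so two
  -- consecutive ones enclose `y`; then `psi n x = H n` and `psi (n + 1) x = H n ∘ φ̄_{x n}`.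
  have hdigit : ∀ h : ℝ → ℝ, ∃ j < P.k,
      y ∈ uIcc (h 0) (h 1) → y ∈ uIcc (h (P.a j)) (h (P.a (j + 1))) := fun h => by
    by_cases hy' : y ∈ uIcc (h 0) (h 1)
    · rw [← P.a_zero, ← P.a_last, hK] at hy'
      obtain ⟨j, hj, hyj⟩ := exists_mem_uIcc_succ (h ∘ P.a) hy'
      exact ⟨j, hK ▸ Nat.lt_succ_of_le hj, fun _ => hyj⟩
    · exact ⟨0, P.k_pos, fun h' => absurd h' hy'⟩
  choose J hJk hJ using hdigit
  let step : (ℝ → ℝ) → ℝ → ℝ := fun h => h ∘ P.phibarJ (J h)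
  let H : ℕ → ℝ → ℝ := fun n => step^[n] id
  have hH : ∀ n, H (n + 1) = H n ∘ P.phibarJ (J (H n)) :=
    fun n => Function.iterate_succ_apply' step n id
  have hpsi : ∀ n, P.psi n (fun m => J (H m)) = H n := fun n => by
    induction n with
    | zero => rfl
    | succ n ih => funext t; rw [P.psi_succ', ih, hH]; rfl
  refine ⟨fun n => J (H n), fun n => hJk _, fun n => ?_⟩
  rw [hpsi]
  induction n with
  | zero => simpa [H, uIcc_of_le zero_le_one] using hy
  | succ n ih =>
    rw [hH]
    rcases P.phibarJ_zero_one (hJk (H n)) with ⟨h₀, h₁⟩ | ⟨h₀, h₁⟩ <;>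
      simp only [Function.comp_apply, h₀, h₁]
    exacts [hJ _ ih, uIcc_comm (H n _) _ ▸ hJ _ ih]

end Itineraries

end PMS

/-- **Validity criterion via surjectivity.** In the piecewise monotone setting, the
φ-expansion is valid if and only if `φ̄_∞` is well-defined on all of `A^ℕ` and the
resulting map `φ̄_∞ : A^ℕ → [0,1]` is surjective. -/
theorem validity_iff_surjective (P : PMS) :
    P.Valid ↔
      (P.WellDefined ∧
        ∀ y ∈ Set.Icc (0 : ℝ) 1, ∃ x : ℕ → ℕ, (∀ n, x n < P.k) ∧
          Filter.Tendsto (fun n => P.phibarN n x) Filter.atTop (nhds y)) := by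
  constructor
  · intro hV
    refine ⟨fun x hx => ?_, fun y hy => ?_⟩
    · obtain ⟨y, hy⟩ := exists_forall_mem_uIcc_of_nested (a := fun n => P.psi n x 0)
        (b := fun n => P.psi n x 1) (P.uIcc_psi_succ_subset hx)
      exact ⟨y, P.tendsto_phibarN_of_valid hV hx hy⟩
    · obtain ⟨x, hx, hxy⟩ := P.exists_forall_mem_uIcc_psi hy
      exact ⟨x, hx, P.tendsto_phibarN_of_valid hV hx hxy⟩
  · rintro ⟨-, hsurj⟩ y hy
    obtain ⟨x, hx, hxy⟩ := hsurj y hy.1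
    rwa [← P.eq_code_of_tendsto hx (P.mem_Icc_diff_S_iff.1 hy).2 hxy]
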